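/- Let F be a field, let r, s ∈ F with s ≠ 0 and s ≠ 1, set c = s(r−1) and b = c·r, and let W be the Tate normal form E(b,c): y² + (1−c)xy − by = x³ − bx² with nonzero discriminant Δ. If the point P = (0,0) satisfies 11•P = O (so that P has exact order 11), then F₁₁(r,s) := rs³ − 3rs² − r² + 4rs − s = 0. (This is the raw form of the modular curve X₁(11).) -/

import Mathlib

/-!
If `11 • P = O` then `5 • P = -(6 • P)`, so `5 • P` and `6 • P` have the same `x`-coordinate.
The multiples `n • P` for `n ≤ 6` are computed by adding `P` one step at a time (for `n ≥ 3` along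
the chord through `(x, y)` and `(0, 0)`, of slope `y / x`). In the parameters `(r, s)` one finds
`x(5P) = rs(s - 1)` and `x(6P) = s(r - 1)(r - s)/(s - 1)²`, and
`rs(s - 1)³ - s(r - 1)(r - s) = s · F₁₁(r, s)`, where `s ≠ 0` since `P` is nonsingular.
-/

open WeierstrassCurve.Affine

section

variable {F : Type*} [Field F]

theorem WeierstrassCurve.Affine.Point.exists_some_add_some_eq [DecidableEq F]
    {W : WeierstrassCurve.Affine F} {x₁ x₂ y₁ y₂ x₃ y₃ : F} (h₁ : W.Nonsingular x₁ y₁)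
    (h₂ : W.Nonsingular x₂ y₂) (hxy : ¬(x₁ = x₂ ∧ y₁ = W.negY x₂ y₂))
    (hx₃ : W.addX x₁ x₂ (W.slope x₁ x₂ y₁ y₂) = x₃)
    (hy₃ : W.addY x₁ x₂ y₁ (W.slope x₁ x₂ y₁ y₂) = y₃) :
    ∃ h₃ : W.Nonsingular x₃ y₃, Point.some _ _ h₁ + Point.some _ _ h₂ = Point.some _ _ h₃ := by
  subst hx₃ hy₃
  exact ⟨_, Point.add_some hxy⟩

def tateNormalForm (b c : F) : WeierstrassCurve.Affine F :=
  { a₁ := 1 - c, a₂ := -b, a₃ := -b, a₄ := 0, a₆ := 0 }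

theorem tateNormalForm_nonsingular_zero_zero_iff {b c : F} :
    (tateNormalForm b c).Nonsingular 0 0 ↔ b ≠ 0 := by
  simp [nonsingular_zero, tateNormalForm]

theorem tateNormalForm_params_ne_zero {b c r s : F} (h₀ : (tateNormalForm b c).Nonsingular 0 0)
    (hc : c = s * (r - 1)) (hb : b = c * r) : s ≠ 0 ∧ r - 1 ≠ 0 ∧ r ≠ 0 := by
  have hb₀ := tateNormalForm_nonsingular_zero_zero_iff.1 h₀
  rw [hb, hc] at hb₀
  simp_all

variable [DecidableEq F]

theorem tateNormalForm_two_smul {b c : F} (h₀ : (tateNormalForm b c).Nonsingular 0 0) :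
    ∃ h₂ : (tateNormalForm b c).Nonsingular b (b * c),
      (2 : ℤ) • Point.some 0 0 h₀ = Point.some _ _ h₂ := by
  have hy : (0 : F) ≠ (tateNormalForm b c).negY 0 0 := by
    simpa [negY, tateNormalForm] using (tateNormalForm_nonsingular_zero_zero_iff.1 h₀).symm
  have hslope : (tateNormalForm b c).slope 0 0 0 0 = 0 := by
    rw [slope_of_Y_ne rfl hy]
    simp [tateNormalForm]
  rw [two_smul]
  exact Point.exists_some_add_some_eq h₀ h₀ (fun hxy ↦ hy hxy.2)
    (by rw [hslope]; simp [addX, tateNormalForm])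
    (by rw [hslope]; simp only [addY, negAddY, addX, negY, tateNormalForm]; ring)

theorem tateNormalForm_succ_smul {b c x y ℓ x' y' : F} {n : ℤ}
    {h₀ : (tateNormalForm b c).Nonsingular 0 0} {h : (tateNormalForm b c).Nonsingular x y}
    (hn : n • Point.some 0 0 h₀ = Point.some x y h) (hx : x ≠ 0) (hℓ : y = ℓ * x)
    (hx' : ℓ ^ 2 + (1 - c) * ℓ + b - x = x') (hy' : b - (1 - c) * x' - ℓ * (x' - x) - y = y') :
    ∃ h' : (tateNormalForm b c).Nonsingular x' y',
      (n + 1) • Point.some 0 0 h₀ = Point.some _ _ h' := by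
  have hslope : (tateNormalForm b c).slope x 0 y 0 = ℓ := by
    rw [slope_of_X_ne hx, div_eq_iff (sub_ne_zero.2 hx), hℓ]
    ring
  rw [add_smul, one_smul, hn]
  exact Point.exists_some_add_some_eq h h₀ (fun hxy ↦ hx hxy.1)
    (by rw [hslope, ← hx']; simp only [addX, tateNormalForm]; ring)
    (by rw [hslope, ← hy', ← hx']; simp only [addY, negAddY, addX, negY, tateNormalForm]; ring)

theorem tateNormalForm_three_smul {b c : F} (h₀ : (tateNormalForm b c).Nonsingular 0 0) :
    ∃ h₃ : (tateNormalForm b c).Nonsingular c (b - c),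
      (3 : ℤ) • Point.some 0 0 h₀ = Point.some _ _ h₃ := by
  obtain ⟨h₂, e₂⟩ := tateNormalForm_two_smul h₀
  exact tateNormalForm_succ_smul e₂ (tateNormalForm_nonsingular_zero_zero_iff.1 h₀) (ℓ := c)
    (by ring) (by ring) (by ring)

theorem tateNormalForm_four_smul {b c r s : F} (h₀ : (tateNormalForm b c).Nonsingular 0 0)
    (hc : c = s * (r - 1)) (hb : b = c * r) :
    ∃ h₄ : (tateNormalForm b c).Nonsingular (r * (r - 1)) (r ^ 2 * (r - 1) * (s - 1)),
      (4 : ℤ) • Point.some 0 0 h₀ = Point.some _ _ h₄ := by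
  obtain ⟨hs, hr₁, -⟩ := tateNormalForm_params_ne_zero h₀ hc hb
  obtain ⟨h₃, e₃⟩ := tateNormalForm_three_smul h₀
  subst hb hc
  exact tateNormalForm_succ_smul e₃ (mul_ne_zero hs hr₁) (ℓ := r - 1) (by ring) (by ring) (by ring)

theorem tateNormalForm_five_smul {b c r s : F} (h₀ : (tateNormalForm b c).Nonsingular 0 0)
    (hc : c = s * (r - 1)) (hb : b = c * r) :
    ∃ h₅ : (tateNormalForm b c).Nonsingular (r * s * (s - 1)) (r * s ^ 2 * (r - s)),
      (5 : ℤ) • Point.some 0 0 h₀ = Point.some _ _ h₅ := by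
  obtain ⟨-, hr₁, hr⟩ := tateNormalForm_params_ne_zero h₀ hc hb
  obtain ⟨h₄, e₄⟩ := tateNormalForm_four_smul h₀ hc hb
  subst hb hc
  exact tateNormalForm_succ_smul e₄ (mul_ne_zero hr hr₁) (ℓ := r * (s - 1)) (by ring) (by ring)
    (by ring)

theorem tateNormalForm_six_smul {b c r s : F} (h₀ : (tateNormalForm b c).Nonsingular 0 0)
    (hs₁ : s ≠ 1) (hc : c = s * (r - 1)) (hb : b = c * r) :
    ∃ h₆ : (tateNormalForm b c).Nonsingular (s * (r - 1) * (r - s) / (s - 1) ^ 2)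
        (s ^ 2 * (r - 1) ^ 2 * (r * s - 2 * r + 1) / (s - 1) ^ 3),
      (6 : ℤ) • Point.some 0 0 h₀ = Point.some _ _ h₆ := by
  obtain ⟨hs, -, hr⟩ := tateNormalForm_params_ne_zero h₀ hc hb
  obtain ⟨h₅, e₅⟩ := tateNormalForm_five_smul h₀ hc hb
  have hs₁' : s - 1 ≠ 0 := sub_ne_zero.2 hs₁
  subst hb hc
  exact tateNormalForm_succ_smul e₅ (mul_ne_zero (mul_ne_zero hr hs) hs₁')
    (ℓ := s * (r - s) / (s - 1)) (by field_simp) (by field_simp; ring) (by field_simp; ring)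

end

open Classical in
theorem raw_form_X1_11_general (F : Type*) [Field F] (r s : F)
    (hs1 : s ≠ 1)
    (c : F) (hc : c = s * (r - 1)) (b : F) (hb : b = c * r)
    (W : WeierstrassCurve.Affine F)
    (hW : W = { a₁ := 1 - c, a₂ := -b, a₃ := -b, a₄ := 0, a₆ := 0 })
    (h : W.Nonsingular 0 0)
    (h11 : (11 : ℤ) • (WeierstrassCurve.Affine.Point.some 0 0 h) = 0) :
    r * s ^ 3 - 3 * r * s ^ 2 - r ^ 2 + 4 * r * s - s = 0 := by
  subst hW
  obtain ⟨hs, -, -⟩ := tateNormalForm_params_ne_zero h hc hb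
  obtain ⟨h₅, e₅⟩ := tateNormalForm_five_smul h hc hb
  obtain ⟨h₆, e₆⟩ := tateNormalForm_six_smul h hs1 hc hb
  have hx : r * s * (s - 1) = s * (r - 1) * (r - s) / (s - 1) ^ 2 := by
    refine (Point.X_eq_iff (h₁ := h₅) (h₂ := h₆)).2 (Or.inr (eq_neg_of_add_eq_zero_left ?_))
    rwa [← e₅, ← e₆, ← add_smul]
  rw [eq_div_iff (pow_ne_zero 2 (sub_ne_zero.2 hs1))] at hx
  have hsF : s * (r * s ^ 3 - 3 * r * s ^ 2 - r ^ 2 + 4 * r * s - s) = 0 := by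
    linear_combination hx
  exact (mul_eq_zero.1 hsF).resolve_left hs

open Classical in
/-- For a field `F`, `r, s ∈ F` with `s ≠ 0` and `s ≠ 1`, set `c = s(r-1)` and
`b = c * r`, and let `W` be the Tate normal form `E(b,c) : y² + (1-c)xy - by = x³ - bx²` with
nonzero discriminant. If the point `P = (0,0)` satisfies `11 • P = O`, then
`F₁₁(r,s) = rs³ - 3rs² - r² + 4rs - s = 0` (the raw form of `X₁(11)`). -/
theorem raw_form_X1_11 (F : Type*) [Field F] (r s : F)
    (hs0 : s ≠ 0) (hs1 : s ≠ 1)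
    (c : F) (hc : c = s * (r - 1)) (b : F) (hb : b = c * r)
    (W : WeierstrassCurve.Affine F)
    (hW : W = { a₁ := 1 - c, a₂ := -b, a₃ := -b, a₄ := 0, a₆ := 0 })
    (hΔ : W.Δ ≠ 0)
    (h : W.Nonsingular 0 0)
    (h11 : (11 : ℤ) • (WeierstrassCurve.Affine.Point.some 0 0 h) = 0) :
    r * s ^ 3 - 3 * r * s ^ 2 - r ^ 2 + 4 * r * s - s = 0 :=
  raw_form_X1_11_general F r s hs1 c hc b hb W hW h h11
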